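/- The double commutator [[H_i, F(w_1)], F(w_2)] equals (2/(w_1-w_2)) · ( (F^{(i)}/(w_1-z_i)) F(w_2) - (F^{(i)}/(w_2-z_i)) F(w_1) ). -/

import Mathlib

/-!
Only the brackets with `F` matter. Each summand `Ω_ij = ½ H_i H_j + E_i F_j + F_i E_j` of the
Gaudin Hamiltonian satisfies `[Ω_ij, F_l] = (δ_il - δ_jl) (H_i F_j - F_i H_j)`, so by the partial
fraction `((w - z_i)⁻¹ - (w - z_j)⁻¹) / (z_i - z_j) = (w - z_i)⁻¹ (w - z_j)⁻¹` the first bracket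
is `Σ_{j ≠ i} (w₁ - z_i)⁻¹ (w₁ - z_j)⁻¹ (H_i F_j - F_i H_j)`. Bracketing `H_i F_k - F_i H_k` with
`F(w₂)` gives `2 ((w₂ - z_k)⁻¹ - (w₂ - z_i)⁻¹) F_i F_k`, and a second partial fraction identity,
in `w₁` and `w₂`, matches the coefficients of `F_i F_k` on both sides; the `k = i` term of the
right-hand side vanishes on its own.
-/

open Finset

attribute [local instance] LieRing.ofAssociativeRing

theorem Ring.mul_lie {A : Type*} [Ring A] (a b c : A) :
    ⁅a * b, c⁆ = a * ⁅b, c⁆ + ⁅a, c⁆ * b := by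
  simp only [Ring.lie_def, mul_sub, sub_mul, mul_assoc]
  abel

theorem lie_sum_smul_of_lie_eq_ite_sub_ite {K L ι : Type*} [CommRing K] [LieRing L]
    [LieAlgebra K L] [Fintype ι] [DecidableEq ι] {X Y : L} {F : ι → L} {i j : ι}
    (h : ∀ l, ⁅X, F l⁆ = ((if i = l then 1 else 0) - (if j = l then 1 else 0) : K) • Y)
    (a : ι → K) :
    ⁅X, ∑ l, a l • F l⁆ = (a i - a j) • Y := by
  simp_rw [lie_sum, lie_smul, h, smul_smul, ← sum_smul, mul_sub, mul_ite, mul_one, mul_zero,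
    sum_sub_distrib, sum_ite_eq, mem_univ, if_true]

theorem two_point_partial_fraction {K : Type*} [Field K] {x y w₁ w₂ : K}
    (h₁x : w₁ ≠ x) (h₁y : w₁ ≠ y) (h₂x : w₂ ≠ x) (h₂y : w₂ ≠ y) (hw : w₁ ≠ w₂) :
    (w₁ - x)⁻¹ * (w₁ - y)⁻¹ * ((w₂ - y)⁻¹ - (w₂ - x)⁻¹) =
      ((w₁ - x)⁻¹ * (w₂ - y)⁻¹ - (w₂ - x)⁻¹ * (w₁ - y)⁻¹) / (w₁ - w₂) := by
  have := sub_ne_zero.2 h₁x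
  have := sub_ne_zero.2 h₁y
  have := sub_ne_zero.2 h₂x
  have := sub_ne_zero.2 h₂y
  have := sub_ne_zero.2 hw
  field_simp
  ring

structure Sl2LoweringRelations (K : Type*) {A ι : Type*} [CommRing K] [Ring A] [Algebra K A]
    [DecidableEq ι] (H E F : ι → A) : Prop where
  lie_H_F : ∀ k l, ⁅H k, F l⁆ = if k = l then (-2 : K) • F l else 0
  lie_E_F : ∀ k l, ⁅E k, F l⁆ = if k = l then H l else 0
  lie_F_F : ∀ k l, ⁅F k, F l⁆ = 0

section Gaudin

variable {K A ι : Type*} [Field K] [Ring A] [Algebra K A] [DecidableEq ι] {H E F : ι → A}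

theorem Sl2LoweringRelations.of_commute
    (hHF : ∀ k, H k * F k - F k * H k = (-2 : K) • F k)
    (hEF : ∀ k, E k * F k - F k * E k = H k)
    (hHFc : ∀ k l, k ≠ l → Commute (H k) (F l))
    (hEFc : ∀ k l, k ≠ l → Commute (E k) (F l))
    (hFFc : ∀ k l, k ≠ l → Commute (F k) (F l)) :
    Sl2LoweringRelations K H E F where
  lie_H_F k l := by
    split_ifs with hkl
    · subst hkl
      exact hHF k
    · exact (hHFc k l hkl).lie_eq
  lie_E_F k l := by
    split_ifs with hkl
    · subst hkl
      exact hEF k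
    · exact (hEFc k l hkl).lie_eq
  lie_F_F k l := by
    obtain rfl | hkl := eq_or_ne k l
    · exact lie_self _
    · exact (hFFc k l hkl).lie_eq

variable (K) in
def gaudinTerm (H E F : ι → A) (i j : ι) : A :=
  (2 : K)⁻¹ • (H i * H j) + E i * F j + F i * E j

theorem Sl2LoweringRelations.lie_gaudinTerm [NeZero (2 : K)] (hR : Sl2LoweringRelations K H E F)
    (i j l : ι) :
    ⁅gaudinTerm K H E F i j, F l⁆ =
      ((if i = l then 1 else 0) - (if j = l then 1 else 0) : K) • (H i * F j - F i * H j) := by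
  simp only [gaudinTerm, add_lie, smul_lie, Ring.mul_lie, hR.lie_H_F, hR.lie_E_F, hR.lie_F_F]
  split_ifs <;> subst_vars <;> simp only [smul_mul_assoc, mul_smul_comm, mul_zero, zero_mul] <;>
    match_scalars <;> field_simp <;> ring

variable [Fintype ι]

variable (K) in
def gaudinHamiltonian (z : ι → K) (H E F : ι → A) (i : ι) : A :=
  ∑ j ∈ univ.erase i, (z i - z j)⁻¹ • gaudinTerm K H E F i j

def loweringField (z : ι → K) (F : ι → A) (w : K) : A :=
  ∑ k, (w - z k)⁻¹ • F k

theorem Sl2LoweringRelations.lie_gaudinHamiltonian_loweringField [NeZero (2 : K)]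
    (hR : Sl2LoweringRelations K H E F) {z : ι → K} (hz : Function.Injective z) {w : K}
    (hw : ∀ k, w ≠ z k) (i : ι) :
    ⁅gaudinHamiltonian K z H E F i, loweringField z F w⁆ =
      ∑ j ∈ univ.erase i, ((w - z i)⁻¹ * (w - z j)⁻¹) • (H i * F j - F i * H j) := by
  rw [gaudinHamiltonian, sum_lie]
  refine sum_congr rfl fun j hj => ?_
  rw [smul_lie, loweringField, lie_sum_smul_of_lie_eq_ite_sub_ite (hR.lie_gaudinTerm i j),
    smul_smul, inv_sub_inv (sub_ne_zero.2 (hw i)) (sub_ne_zero.2 (hw j))]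
  have hzij : z i - z j ≠ 0 := sub_ne_zero.2 (hz.ne (ne_of_mem_erase hj).symm)
  congr 1
  field_simp
  ring

theorem Sl2LoweringRelations.lie_commutator_loweringField (hR : Sl2LoweringRelations K H E F)
    (z : ι → K) (w : K) (i k : ι) :
    ⁅H i * F k - F i * H k, loweringField z F w⁆ =
      ((w - z k)⁻¹ - (w - z i)⁻¹) • (2 : K) • (F i * F k) := by
  refine lie_sum_smul_of_lie_eq_ite_sub_ite (fun l => ?_) _
  simp only [sub_lie, Ring.mul_lie, hR.lie_H_F, hR.lie_F_F]
  split_ifs <;> subst_vars <;> simp only [smul_mul_assoc, mul_smul_comm, mul_zero, zero_mul] <;>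
    module

theorem smul_mul_loweringField_sub_smul_mul_loweringField (z : ι → K) (F : ι → A)
    (w₁ w₂ : K) (i : ι) :
    ((w₁ - z i)⁻¹ • F i) * loweringField z F w₂ - ((w₂ - z i)⁻¹ • F i) * loweringField z F w₁ =
      ∑ k ∈ univ.erase i,
        ((w₁ - z i)⁻¹ * (w₂ - z k)⁻¹ - (w₂ - z i)⁻¹ * (w₁ - z k)⁻¹) • (F i * F k) := by
  simp only [loweringField, mul_sum, ← sum_sub_distrib, smul_mul_smul_comm, ← sub_smul]
  rw [← sum_erase_add _ _ (mem_univ i), mul_comm (w₁ - z i)⁻¹, sub_self, zero_smul, add_zero]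

end Gaudin

theorem gaudin_double_commutator_general {N : ℕ} (A : Type*) [Ring A] [Algebra ℂ A]
    (z : Fin N → ℂ) (hz : Function.Injective z)
    (w₁ w₂ : ℂ) (hw₁ : ∀ k, w₁ ≠ z k) (hw₂ : ∀ k, w₂ ≠ z k) (hw : w₁ ≠ w₂)
    (H E F : Fin N → A)
    (hHFk : ∀ k, H k * F k - F k * H k = (-2 : ℂ) • F k)
    (hEFk : ∀ k, E k * F k - F k * E k = H k)
    (hcross : ∀ k l, k ≠ l →
      Commute (H k) (H l) ∧ Commute (H k) (E l) ∧ Commute (H k) (F l) ∧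
      Commute (E k) (E l) ∧ Commute (E k) (F l) ∧ Commute (F k) (F l)) :
    ∀ i,
      ((∑ j ∈ Finset.univ.erase i, (z i - z j)⁻¹ •
            ((2 : ℂ)⁻¹ • (H i * H j) + E i * F j + F i * E j)) *
          (∑ k, (w₁ - z k)⁻¹ • F k) -
        (∑ k, (w₁ - z k)⁻¹ • F k) *
          (∑ j ∈ Finset.univ.erase i, (z i - z j)⁻¹ •
            ((2 : ℂ)⁻¹ • (H i * H j) + E i * F j + F i * E j))) *
        (∑ k, (w₂ - z k)⁻¹ • F k) -
      (∑ k, (w₂ - z k)⁻¹ • F k) *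
        ((∑ j ∈ Finset.univ.erase i, (z i - z j)⁻¹ •
            ((2 : ℂ)⁻¹ • (H i * H j) + E i * F j + F i * E j)) *
          (∑ k, (w₁ - z k)⁻¹ • F k) -
        (∑ k, (w₁ - z k)⁻¹ • F k) *
          (∑ j ∈ Finset.univ.erase i, (z i - z j)⁻¹ •
            ((2 : ℂ)⁻¹ • (H i * H j) + E i * F j + F i * E j))) =
      (2 / (w₁ - w₂)) •
        (((w₁ - z i)⁻¹ • F i) * (∑ k, (w₂ - z k)⁻¹ • F k) -
          ((w₂ - z i)⁻¹ • F i) * (∑ k, (w₁ - z k)⁻¹ • F k)) := by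
  intro i
  have hR : Sl2LoweringRelations ℂ H E F := .of_commute hHFk hEFk
    (fun k l h => (hcross k l h).2.2.1) (fun k l h => (hcross k l h).2.2.2.2.1)
    (fun k l h => (hcross k l h).2.2.2.2.2)
  show ⁅⁅gaudinHamiltonian ℂ z H E F i, loweringField z F w₁⁆, loweringField z F w₂⁆ =
    (2 / (w₁ - w₂)) • ((w₁ - z i)⁻¹ • F i * loweringField z F w₂ -
      (w₂ - z i)⁻¹ • F i * loweringField z F w₁)
  rw [hR.lie_gaudinHamiltonian_loweringField hz hw₁, sum_lie,
    smul_mul_loweringField_sub_smul_mul_loweringField, smul_sum]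
  refine sum_congr rfl fun k _ => ?_
  rw [smul_lie, hR.lie_commutator_loweringField, smul_smul, smul_smul, smul_smul]
  congr 1
  linear_combination 2 * two_point_partial_fraction (hw₁ i) (hw₁ k) (hw₂ i) (hw₂ k) hw

/-- The double commutator `[[H_i, F(w_1)], F(w_2)]` equals
`(2/(w_1-w_2)) ((F^(i)/(w_1-z_i)) F(w_2) - (F^(i)/(w_2-z_i)) F(w_1))`. -/
theorem gaudin_double_commutator {N : ℕ} (A : Type*) [Ring A] [Algebra ℂ A]
    (z : Fin N → ℂ) (hz : Function.Injective z)
    (w₁ w₂ : ℂ) (hw₁ : ∀ k, w₁ ≠ z k) (hw₂ : ∀ k, w₂ ≠ z k) (hw : w₁ ≠ w₂)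
    (H E F : Fin N → A)
    (hHEk : ∀ k, H k * E k - E k * H k = (2 : ℂ) • E k)
    (hHFk : ∀ k, H k * F k - F k * H k = (-2 : ℂ) • F k)
    (hEFk : ∀ k, E k * F k - F k * E k = H k)
    (hcross : ∀ k l, k ≠ l →
      Commute (H k) (H l) ∧ Commute (H k) (E l) ∧ Commute (H k) (F l) ∧
      Commute (E k) (E l) ∧ Commute (E k) (F l) ∧ Commute (F k) (F l)) :
    ∀ i,
      ((∑ j ∈ Finset.univ.erase i, (z i - z j)⁻¹ •
            ((2 : ℂ)⁻¹ • (H i * H j) + E i * F j + F i * E j)) *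
          (∑ k, (w₁ - z k)⁻¹ • F k) -
        (∑ k, (w₁ - z k)⁻¹ • F k) *
          (∑ j ∈ Finset.univ.erase i, (z i - z j)⁻¹ •
            ((2 : ℂ)⁻¹ • (H i * H j) + E i * F j + F i * E j))) *
        (∑ k, (w₂ - z k)⁻¹ • F k) -
      (∑ k, (w₂ - z k)⁻¹ • F k) *
        ((∑ j ∈ Finset.univ.erase i, (z i - z j)⁻¹ •
            ((2 : ℂ)⁻¹ • (H i * H j) + E i * F j + F i * E j)) *
          (∑ k, (w₁ - z k)⁻¹ • F k) -
        (∑ k, (w₁ - z k)⁻¹ • F k) *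
          (∑ j ∈ Finset.univ.erase i, (z i - z j)⁻¹ •
            ((2 : ℂ)⁻¹ • (H i * H j) + E i * F j + F i * E j))) =
      (2 / (w₁ - w₂)) •
        (((w₁ - z i)⁻¹ • F i) * (∑ k, (w₂ - z k)⁻¹ • F k) -
          ((w₂ - z i)⁻¹ • F i) * (∑ k, (w₁ - z k)⁻¹ • F k)) :=
  gaudin_double_commutator_general A z hz w₁ w₂ hw₁ hw₂ hw H E F hHFk hEFk hcross
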